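/- arXiv:1011.5155 — 2 statements merged into one kernel-verified Lean document; each statement's English description precedes it below -/
import Mathlib

section
/- For the deformed polynomial φ_t(x) = x² − 3/4 + t, the polynomial φ_t²(x) − x = x⁴ + (2t − 3/2)x² − x + (t² − t/2 − 3/16) has four distinct roots over ℂ whenever t ≠ 0 and t ≠ 1. -/
/-!
Writing `φ = X² + c`, the period-two polynomial factors as
`φ(φ(x)) - x = (x² - x + c)(x² + x + c + 1)`, the first factor carrying the fixed points.
The two quadratics have discriminants `1 - 4c` and `-3 - 4c`, and any common root `x`
satisfies `2x + 1 = 0`, which forces `4c + 3 = 0`. With `c = t - 3/4` these conditions read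
`t ≠ 1` and `t ≠ 0`, so `φ∘φ - X` is separable and its four roots are distinct.
-/

open Polynomial

namespace Polynomial

theorem separable_X_sq_add_C_mul_X_add_C {R : Type*} [CommRing R] {b c : R}
    (h : IsUnit (discrim 1 b c)) : (X ^ 2 + C b * X + C c).Separable := by
  obtain ⟨u, hu⟩ := h
  rw [separable_def']
  -- `p' ^ 2 - 4 * p = C (discrim 1 b c)` for `p = X ^ 2 + C b * X + C c`
  refine ⟨-4 * C ((u⁻¹ : Rˣ) : R),
    C ((u⁻¹ : Rˣ) : R) * derivative (X ^ 2 + C b * X + C c), ?_⟩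
  have hdisc : C ((u⁻¹ : Rˣ) : R) * C (discrim 1 b c) = 1 := by
    rw [← C_mul, ← hu, Units.inv_mul, C_1]
  simp only [derivative_add, derivative_X_pow, derivative_C_mul_X, derivative_C, discrim,
    C_sub, C_mul, C_pow, C_1, C_ofNat, map_natCast] at hdisc ⊢
  linear_combination hdisc

variable {K : Type*} [Field K]

theorem sq_add_C_comp_self_sub_X (c : K) :
    (X ^ 2 + C c).comp (X ^ 2 + C c) - X =
      (X ^ 2 + C (-1) * X + C c) * (X ^ 2 + C 1 * X + C (c + 1)) := by
  simp only [add_comp, X_pow_comp, C_comp, C_neg, C_add, C_1]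
  ring

theorem isCoprime_X_sq_sub_X_add_C_X_sq_add_X_add_C {c : K} (hc : 4 * c + 3 ≠ 0) :
    IsCoprime (X ^ 2 + C (-1) * X + C c) (X ^ 2 + C 1 * X + C (c + 1)) := by
  -- Bézout: `(2X + 1) q₁ - (2X - 3) q₂ = 4c + 3`
  refine ⟨C (4 * c + 3)⁻¹ * (2 * X + 1), -C (4 * c + 3)⁻¹ * (2 * X - 3), ?_⟩
  have hinv : C (4 * c + 3)⁻¹ * C (4 * c + 3) = 1 := by rw [← C_mul, inv_mul_cancel₀ hc, C_1]
  simp only [C_neg, C_add, C_mul, C_1, C_ofNat] at hinv ⊢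
  linear_combination hinv

theorem separable_sq_add_C_comp_self_sub_X {c : K} (h₁ : 1 - 4 * c ≠ 0) (h₂ : 4 * c + 3 ≠ 0) :
    ((X ^ 2 + C c).comp (X ^ 2 + C c) - X).Separable := by
  rw [sq_add_C_comp_self_sub_X]
  refine .mul (separable_X_sq_add_C_mul_X_add_C ?_) (separable_X_sq_add_C_mul_X_add_C ?_)
    (isCoprime_X_sq_sub_X_add_C_X_sq_add_X_add_C h₂)
  · exact isUnit_iff_ne_zero.mpr fun h => h₁ (by rw [discrim] at h; linear_combination h)
  · exact isUnit_iff_ne_zero.mpr fun h => h₂ (by rw [discrim] at h; linear_combination -h)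

theorem card_roots_toFinset_eq_natDegree_of_separable [IsAlgClosed K] [DecidableEq K] {p : K[X]}
    (hp : p.Separable) : p.roots.toFinset.card = p.natDegree := by
  rw [Multiset.toFinset_card_of_nodup (nodup_roots hp), IsAlgClosed.card_roots_eq_natDegree]

end Polynomial

theorem stmt4 (t : ℂ) (ht0 : t ≠ 0) (ht1 : t ≠ 1) :
    let φ : ℂ[X] := X ^ 2 - C (3 / 4) + C t
    φ.comp φ - X =
      X ^ 4 + C (2 * t - 3 / 2) * X ^ 2 - X + C (t ^ 2 - t / 2 - 3 / 16) ∧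
    (φ.comp φ - X).roots.toFinset.card = 4 := by
  intro φ
  have hφ : φ = X ^ 2 + C (t - 3 / 4) := by rw [C_sub]; ring
  have hexpand : φ.comp φ - X =
      X ^ 4 + C (2 * t - 3 / 2) * X ^ 2 - X + C (t ^ 2 - t / 2 - 3 / 16) := by
    refine Polynomial.funext fun x => ?_
    simp only [φ, eval_sub, eval_add, eval_mul, eval_pow, eval_comp, eval_X, eval_C]
    ring
  refine ⟨hexpand, ?_⟩
  have hsep : (φ.comp φ - X).Separable := by
    rw [hφ]
    refine separable_sq_add_C_comp_self_sub_X ?_ ?_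
    · exact fun h => ht1 (by linear_combination -h / 4)
    · exact fun h => ht0 (by linear_combination h / 4)
  rw [card_roots_toFinset_eq_natDegree_of_separable hsep, hexpand]
  compute_degree!
end

section
/- n divides Σ_{d ∣ n} μ(n/d) · #Fix(f^d) for any function f on a finite set X and any n ≥ 1, since the points of minimal period n are partitioned into orbits (periodic cycles) of size exactly n. -/
/-!
Every fixed point of `f^[d]` has a minimal period dividing `d`, so
`#Fix(f^[d]) = ∑_{e ∣ d} #{x | minimalPeriod f x = e}` and Möbius inversion identifies the sum
in the theorem with the number of points of minimal period `n`. These points fall into periodic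
orbits, each consisting of exactly `n` points of minimal period `n`, so `n` divides their number.
-/

open ArithmeticFunction Finset Function
open scoped ArithmeticFunction.Moebius

theorem Finset.dvd_card_of_forall_card_fiber_eq {ι M : Type*} [DecidableEq M] (s : Finset ι)
    (g : ι → M) (n : ℕ) (h : ∀ x ∈ s, #{y ∈ s | g y = g x} = n) : n ∣ #s := by
  rw [card_eq_sum_card_image g s]
  refine dvd_sum fun m hm => ?_
  obtain ⟨x, hx, rfl⟩ := mem_image.1 hm
  rw [h x hx]

theorem Cycle.card_toFinset_of_nodup {α : Type*} [DecidableEq α] {s : Cycle α} (hs : s.Nodup) :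
    #s.toFinset = s.length := by
  induction s using Quotient.inductionOn with
  | h l => exact List.toFinset_card_of_nodup (Cycle.nodup_coe_iff.1 hs)

@[simp]
theorem Cycle.mem_toFinset {α : Type*} [DecidableEq α] {s : Cycle α} {a : α} :
    a ∈ s.toFinset ↔ a ∈ s := by
  induction s using Quotient.inductionOn with
  | h l => exact List.mem_toFinset.trans Cycle.mem_coe_iff.symm

section Dynamics

variable {α : Type*} [Fintype α] [DecidableEq α] (f : α → α)

theorem card_isPeriodicPt_eq_sum_card_minimalPeriod_eq {d : ℕ} (hd : 0 < d) :
    #{x | f^[d] x = x} = ∑ e ∈ d.divisors, #{x | minimalPeriod f x = e} := by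
  rw [card_eq_sum_card_fiberwise (f := minimalPeriod f) (s := {x | f^[d] x = x})
    (t := d.divisors) fun x hx =>
      Nat.mem_divisors.2 ⟨IsPeriodicPt.minimalPeriod_dvd (mem_filter.1 hx).2, hd.ne'⟩]
  refine sum_congr rfl fun e he => congrArg card <| filter_filter _ _ _ |>.trans ?_
  refine filter_congr fun x _ => and_iff_right_of_imp fun hx => ?_
  exact isPeriodicPt_iff_minimalPeriod_dvd.2 (hx ▸ Nat.dvd_of_mem_divisors he)

theorem dvd_card_minimalPeriod_eq {n : ℕ} (hn : 0 < n) : n ∣ #{x | minimalPeriod f x = n} := by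
  refine dvd_card_of_forall_card_fiber_eq _ (periodicOrbit f) n fun x hx => ?_
  have hxn : minimalPeriod f x = n := (mem_filter.1 hx).2
  have hx : x ∈ periodicPts f := minimalPeriod_pos_iff_mem_periodicPts.1 (hxn ▸ hn)
  have fiber_eq : ({y ∈ {y | minimalPeriod f y = n} | periodicOrbit f y = periodicOrbit f x} :
      Finset α) = (periodicOrbit f x).toFinset := by
    ext y
    simp only [mem_filter, mem_univ, true_and, Cycle.mem_toFinset]
    constructor
    · rintro ⟨hyn, horbit⟩
      rw [← horbit]
      exact self_mem_periodicOrbit (minimalPeriod_pos_iff_mem_periodicPts.1 (hyn ▸ hn))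
    · rw [mem_periodicOrbit_iff hx]
      rintro ⟨k, rfl⟩
      exact ⟨minimalPeriod_apply_iterate hx k ▸ hxn, periodicOrbit_apply_iterate_eq hx k⟩
  rw [fiber_eq, Cycle.card_toFinset_of_nodup nodup_periodicOrbit, periodicOrbit_length, hxn]

end Dynamics

theorem stmt19 (X : Type*) [Fintype X] [DecidableEq X] (f : X → X) (n : ℕ)
    (hn : 1 ≤ n) :
    (n : ℤ) ∣ ∑ d ∈ n.divisors, (μ (n / d) : ℤ) *
      ((univ.filter fun x => f^[d] x = x).card : ℤ) := by
  have inversion := (sum_eq_iff_sum_mul_moebius_eq (R := ℤ)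
    (f := fun e => (#{x | minimalPeriod f x = e} : ℤ))
    (g := fun d => (#{x | f^[d] x = x} : ℤ))).1
    (fun d hd => mod_cast (card_isPeriodicPt_eq_sum_card_minimalPeriod_eq f hd).symm) n hn
  rw [← Nat.sum_divisorsAntidiagonal' fun a b => (μ a : ℤ) * #{x | f^[b] x = x}]
  simp only [Int.cast_id] at inversion
  rw [inversion]
  exact_mod_cast dvd_card_minimalPeriod_eq f hn
end
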